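/- arXiv:2602.18040 — 2 statements merged into one kernel-verified Lean document; each statement's English description precedes it below -/
import Mathlib

section
/- For a propositional formula φ (no modal operators), the truth set in the HMS-transform satisfies: for every Φ ⊇ At(φ) and every w ∈ W, [w]_Φ ∈ ||φ|| if and only if M,w ⊨ φ in the original AIL model. -/
/-- Propositional formulas over atoms `P`. -/
inductive PL (P : Type*) where
  | atom (p : P) : PL P
  | neg (φ : PL P) : PL P
  | conj (φ ψ : PL P) : PL P

/-- The set of atoms occurring in a propositional formula. -/
def PL.atoms {P : Type*} : PL P → Set P
  | .atom p => {p}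
  | .neg φ => φ.atoms
  | .conj φ ψ => φ.atoms ∪ ψ.atoms

/-- Propositional satisfaction at a world of the AIL model. -/
def PL.sat {W P : Type*} (V : P → Set W) (w : W) : PL P → Prop
  | .atom p => w ∈ V p
  | .neg φ => ¬ PL.sat V w φ
  | .conj φ ψ => PL.sat V w φ ∧ PL.sat V w ψ

/-- Agreement of the valuation on all atoms in `Φ` (the relation `≈_Φ`). -/
def agreeOn {W P : Type*} (V : P → Set W) (Φ : Set P) (w v : W) : Prop :=
  ∀ p ∈ Φ, (w ∈ V p ↔ v ∈ V p)

def aSetoid {W P : Type*} (V : P → Set W) (Φ : Set P) : Setoid W :=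
  ⟨agreeOn V Φ,
    ⟨fun _ _ _ => Iff.rfl, fun h p hp => (h p hp).symm,
      fun h1 h2 p hp => (h1 p hp).trans (h2 p hp)⟩⟩

/-- The state space `W_Φ := W/≈_Φ` of the HMS-transform. -/
abbrev SpaceAt {W P : Type*} (V : P → Set W) (Φ : Set P) := Quotient (aSetoid V Φ)

/-- `W* = ⋃_{Φ ⊆ 𝒫} W_Φ`: the disjoint union of the state spaces. -/
abbrev States (W P : Type*) (V : P → Set W) := Σ Φ : Set P, SpaceAt V Φ

/-- The projection `m^Φ_Ψ : W_Φ → W_Ψ` for `Ψ ⊆ Φ`. -/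
def projm {W P : Type*} (V : P → Set W) {Φ Ψ : Set P} (h : Ψ ⊆ Φ) :
    SpaceAt V Φ → SpaceAt V Ψ :=
  Quotient.map' id (fun _ _ hwv p hp => hwv p (h hp))

/-- The truth set `||φ||` of a propositional formula in the HMS-transform,
    using the valuation `v*(p) = ⋃_{p ∈ Φ} {[w]_Φ : w ∈ V(p)}`, the HMS
    negation (relative complement on spaces above `At(φ)`) and intersection. -/
def semPL {W P : Type*} (V : P → Set W) : PL P → Set (States W P V)
  | .atom p => {x | p ∈ x.1 ∧ ∃ w ∈ V p, x.2 = Quotient.mk (aSetoid V x.1) w}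
  | .neg φ => {x | φ.atoms ⊆ x.1 ∧ x ∉ semPL V φ}
  | .conj φ ψ => semPL V φ ∩ semPL V ψ

/-- for a propositional formula `φ`, every `Φ ⊇ At(φ)` and
    every world `w`, `[w]_Φ ∈ ||φ||` in the HMS-transform iff `M,w ⊨ φ`
    in the original AIL model. -/
theorem semPL_iff_sat {W P : Type*} (V : P → Set W) (φ : PL P) (Φ : Set P)
    (hAt : φ.atoms ⊆ Φ) (w : W) :
    (⟨Φ, Quotient.mk (aSetoid V Φ) w⟩ : States W P V) ∈ semPL V φ ↔
      PL.sat V w φ := by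
  induction φ with
  | atom p =>
    simp only [semPL, PL.sat, Set.mem_setOf_eq]
    constructor
    · rintro ⟨hp, v, hv, he⟩
      have := Quotient.exact he.symm
      exact (this p (hAt rfl)).mp hv
    · intro hw
      exact ⟨hAt rfl, w, hw, rfl⟩
  | neg φ ih =>
    have hA : φ.atoms ⊆ Φ := hAt
    simp only [semPL, PL.sat, Set.mem_setOf_eq]
    rw [ih hA]
    tauto
  | conj φ ψ ihφ ihψ =>
    have h1 : φ.atoms ⊆ Φ := fun p hp => hAt (Or.inl hp)
    have h2 : ψ.atoms ⊆ Φ := fun p hp => hAt (Or.inr hp)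
    simp only [semPL, PL.sat, Set.mem_inter_iff]
    rw [ihφ h1, ihψ h2]
end

section
/- Truth preservation for atomic and Boolean formulas: for every propositional formula φ and world w in an AIL model M, M,w ⊨_AIL φ iff t(M),[w]_{At(φ)} ⊨_HMS φ. -/
lemma sat_iff_semPL_aux {W P : Type*} (V : P → Set W) (φ : PL P) (Φ : Set P)
    (h : φ.atoms ⊆ Φ) (w : W) :
    PL.sat V w φ ↔ (⟨Φ, Quotient.mk (aSetoid V Φ) w⟩ : States W P V) ∈ semPL V φ := by
  induction φ generalizing Φ with
  | atom p =>
    have hp : p ∈ Φ := h rfl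
    simp only [semPL, PL.sat, Set.mem_setOf_eq]
    constructor
    · intro hw; exact ⟨hp, w, hw, rfl⟩
    · rintro ⟨-, v, hv, hq⟩
      have := Quotient.exact hq
      exact (this p hp).mpr hv
  | neg φ ih =>
    have hsub : φ.atoms ⊆ Φ := h
    simp only [semPL, PL.sat, Set.mem_setOf_eq]
    rw [ih Φ hsub]
    tauto
  | conj φ ψ ihφ ihψ =>
    have h1 : φ.atoms ⊆ Φ := fun p hp => h (Or.inl hp)
    have h2 : ψ.atoms ⊆ Φ := fun p hp => h (Or.inr hp)
    simp only [semPL, PL.sat, Set.mem_inter_iff]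
    rw [ihφ Φ h1, ihψ Φ h2]

/-- truth preservation for propositional formulas:
    `M,w ⊨_AIL φ` iff `t(M),[w]_{At(φ)} ⊨_HMS φ`. -/
theorem sat_iff_semPL_atoms {W P : Type*} (V : P → Set W) (φ : PL P) (w : W) :
    PL.sat V w φ ↔
      (⟨φ.atoms, Quotient.mk (aSetoid V φ.atoms) w⟩ : States W P V) ∈ semPL V φ := by
  exact sat_iff_semPL_aux V φ φ.atoms subset_rfl w
end
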